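/- The support of C_n has size at most ⌊4^n/3⌋ + 1, i.e., the number of binary sequences of length 2n with C_n nonzero is at most ⌊2^{2n}/3⌋ + 1. -/
import Mathlib


/-! Binary sequences are encoded as `List Bool` (`false = 0`, `true = 1`); the free
abelian group on binary sequences is `List Bool →₀ ℤ`. -/

/-- Extend a map on binary sequences ℤ-linearly to the free abelian group. -/
noncomputable def extendZ (f : List Bool → (List Bool →₀ ℤ)) :
    (List Bool →₀ ℤ) →+ (List Bool →₀ ℤ) :=
  Finsupp.liftAddHom fun l => zmultiplesHom _ (f l)

/-- Extend a ℤ-valued function on binary sequences ℤ-linearly. -/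
noncomputable def liftZ (f : List Bool → ℤ) : (List Bool →₀ ℤ) →+ ℤ :=
  Finsupp.liftAddHom fun l => zmultiplesHom _ (f l)

/-- The reverse map `R`: complement every bit. -/
noncomputable def Rhom : (List Bool →₀ ℤ) →+ (List Bool →₀ ℤ) :=
  extendZ fun l => Finsupp.single (l.map (fun b => !b)) 1

/-- The basic expansion at (0-based) position `i`: a sequence with bits `(0,0)` in
positions `(i, i+1)` is sent to the sum of itself and the sequence with those bits
replaced by `(1,1)`; all other sequences are fixed. -/
noncomputable def basicExp (i : ℕ) (l : List Bool) : List Bool →₀ ℤ :=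
  if l.getD i true = false ∧ l.getD (i + 1) true = false then
    Finsupp.single l 1 + Finsupp.single ((l.set i true).set (i + 1) true) 1
  else Finsupp.single l 1

/-- `EhomAux j` is the composite of the basic expansions at positions `0, …, j-1`
(position `0` applied first). `EhomAux (m-1)` is the expansion map `E_m`. -/
noncomputable def EhomAux : ℕ → ((List Bool →₀ ℤ) →+ (List Bool →₀ ℤ))
  | 0 => AddMonoidHom.id _
  | (j + 1) => (extendZ (basicExp j)).comp (EhomAux j)

/-- Contraction of the first two bits: `(0,0) ↦ 1`, `(1,1) ↦ 1`, `(1,0) ↦ 0`,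
and `(0,1)` kills the generator. -/
def contractFront : Bool → Bool → Option Bool
  | false, false => some true
  | true, true => some true
  | true, false => some false
  | false, true => none

/-- Contraction of the last two bits: `(0,0) ↦ 1`, `(1,1) ↦ 1`, `(0,1) ↦ 0`,
and `(1,0)` kills the generator. -/
def contractBack : Bool → Bool → Option Bool
  | false, false => some true
  | true, true => some true
  | false, true => some false
  | true, false => none

/-- The contraction map `K` on generators. -/
noncomputable def Kfun (l : List Bool) : List Bool →₀ ℤ :=
  match l, l.reverse with
  | a :: b :: _, c :: d :: _ =>
    match contractFront a b, contractBack d c with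
    | some x, some z => Finsupp.single (x :: (((l.drop 2).dropLast.dropLast) ++ [z])) 1
    | _, _ => 0
  | _, _ => 0

/-- The contraction map `K`, extended ℤ-linearly. -/
noncomputable def Khom : (List Bool →₀ ℤ) →+ (List Bool →₀ ℤ) := extendZ Kfun

/-- The base function `C_1`: value `1` on `(0,0)` and `(1,1)`, `0` otherwise. -/
def C1fun (l : List Bool) : ℤ :=
  if l = [false, false] ∨ l = [true, true] then 1 else 0

/-- `Chom n` is the function `C_n` viewed as a homomorphism from the free abelian group
on binary sequences to `ℤ`, defined by `C_1` as above and the inductive formula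
`C_n = C_{n-1} ∘ R_{2n-2} ∘ E_{2n-2} ∘ K_{2n}` (here `EhomAux (2n-3)` is `E_{2n-2}`). -/
noncomputable def Chom : ℕ → ((List Bool →₀ ℤ) →+ ℤ)
  | 0 => liftZ C1fun
  | 1 => liftZ C1fun
  | (n + 2) => (((Chom (n + 1)).comp Rhom).comp (EhomAux (2 * n + 1))).comp Khom

/-- The function `C_n : {0,1}^{2n} → ℤ`. -/
noncomputable def Cfun (n : ℕ) (ε : Fin (2 * n) → Bool) : ℤ :=
  Chom n (Finsupp.single (List.ofFn ε) 1)

/-! ### Auxiliary lemmas -/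

lemma extendZ_single (f : List Bool → (List Bool →₀ ℤ)) (l : List Bool) (c : ℤ) :
    extendZ f (Finsupp.single l c) = c • f l := by
  simp [extendZ]

lemma extendZ_apply (f : List Bool → (List Bool →₀ ℤ)) (x : List Bool →₀ ℤ) :
    extendZ f x = x.sum fun l c => c • f l := by
  rw [extendZ, Finsupp.liftAddHom_apply]
  rfl

lemma liftZ_apply (f : List Bool → ℤ) (x : List Bool →₀ ℤ) :
    liftZ f x = x.sum fun l c => c • f l := by
  rw [liftZ, Finsupp.liftAddHom_apply]
  rfl

/-- Subgroup of elements supported on lists satisfying `P`. -/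
noncomputable def okSet (P : List Bool → Prop) : AddSubgroup (List Bool →₀ ℤ) where
  carrier := {x | ∀ l, x l ≠ 0 → P l}
  zero_mem' := by intro l h; simp at h
  add_mem' := by
    intro x y hx hy l h
    by_cases hxl : x l = 0
    · exact hy l (by simpa [Finsupp.add_apply, hxl] using h)
    · exact hx l hxl
  neg_mem' := by
    intro x hx l h
    exact hx l (by simpa using h)

lemma single_mem_okSet {P : List Bool → Prop} {l : List Bool} (h : P l) (c : ℤ) :
    Finsupp.single l c ∈ okSet P := by
  intro l' h'
  rcases eq_or_ne l l' with rfl | hne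
  · exact h
  · simp [Finsupp.single_apply, hne] at h'

lemma okSet_mono {P Q : List Bool → Prop} (h : ∀ l, P l → Q l) {x : List Bool →₀ ℤ}
    (hx : x ∈ okSet P) : x ∈ okSet Q :=
  fun l hl => h l (hx l hl)

lemma extendZ_mem {P Q : List Bool → Prop} {f : List Bool → (List Bool →₀ ℤ)}
    (hf : ∀ l, P l → f l ∈ okSet Q) {x : List Bool →₀ ℤ} (hx : x ∈ okSet P) :
    extendZ f x ∈ okSet Q := by
  rw [extendZ_apply]
  refine AddSubgroup.sum_mem _ (fun l hl => ?_)
  exact AddSubgroup.zsmul_mem _ (hf l (hx l (Finsupp.mem_support_iff.mp hl))) _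

lemma liftZ_eq_zero {f : List Bool → ℤ} {x : List Bool →₀ ℤ}
    (h : ∀ l, x l ≠ 0 → f l = 0) : liftZ f x = 0 := by
  rw [liftZ_apply]
  refine Finset.sum_eq_zero (fun l hl => ?_)
  simp [h l (Finsupp.mem_support_iff.mp hl)]

/-- Value of a list of bits, least significant first. -/
def bval : List Bool → ℕ
  | [] => 0
  | b :: t => b.toNat + 2 * bval t

lemma bval_append (u v : List Bool) : bval (u ++ v) = bval u + 2 ^ u.length * bval v := by
  induction u with
  | nil => simp [bval]
  | cons b t ih => simp [bval, ih, pow_succ]; ring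

lemma bval_lt (l : List Bool) : bval l < 2 ^ l.length := by
  induction l with
  | nil => simp [bval]
  | cons b t ih => cases b <;> simp [bval, pow_succ] <;> omega

lemma bval_inj : ∀ {l l' : List Bool}, l.length = l'.length → bval l = bval l' → l = l'
  | [], [], _, _ => rfl
  | b :: t, b' :: t', hlen, hval => by
    simp only [List.length_cons, Nat.succ.injEq] at hlen
    have hb : b = b' ∧ bval t = bval t' := by
      cases b <;> cases b' <;> simp [bval] at hval ⊢ <;> omega
    rw [hb.1, bval_inj hlen hb.2]

lemma bval_set_true (l : List Bool) (i : ℕ) (h : l.getD i true = false) :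
    bval (l.set i true) = bval l + 2 ^ i := by
  induction l generalizing i with
  | nil => simp [List.getD] at h
  | cons b t ih =>
    cases i with
    | zero =>
      simp only [List.getD_cons_zero] at h
      subst h; simp [bval]; omega
    | succ j =>
      simp only [List.getD_cons_succ] at h
      simp [bval, List.set, ih j h, pow_succ]; ring

lemma bval_map_not (l : List Bool) : bval (l.map (fun b => !b)) + bval l + 1 = 2 ^ l.length := by
  induction l with
  | nil => simp [bval]
  | cons b t ih => cases b <;> simp [bval, pow_succ] <;> omega

lemma two_pow_even (k : ℕ) : (2 : ZMod 3) ^ (2 * k) = 1 := by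
  rw [pow_mul, show (2 : ZMod 3) ^ 2 = 1 by decide, one_pow]

/-! ### The basic expansion preserves length and residue -/

lemma basicExp_mem (i m : ℕ) (l : List Bool)
    (hl : l.length = m ∧ (bval l : ZMod 3) ≠ 0) :
    basicExp i l ∈ okSet (fun l' => l'.length = m ∧ (bval l' : ZMod 3) ≠ 0) := by
  unfold basicExp
  split_ifs with h
  · refine AddSubgroup.add_mem _ (single_mem_okSet hl 1) (single_mem_okSet ⟨?_, ?_⟩ 1)
    · simp [hl.1]
    · have h1 := bval_set_true l i h.1
      have hg : (l.set i true).getD (i + 1) true = false := by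
        rw [List.getD_eq_getElem?_getD, List.getElem?_set_ne (by omega),
          ← List.getD_eq_getElem?_getD]
        exact h.2
      have h2 := bval_set_true _ (i + 1) hg
      rw [h2, h1]
      push_cast
      have hz : (2 : ZMod 3) ^ i + (2 : ZMod 3) ^ (i + 1) = 0 := by
        rw [pow_succ, show (2:ZMod 3) ^ i + 2 ^ i * 2 = 2 ^ i * 3 by ring,
          show (3 : ZMod 3) = 0 from rfl, mul_zero]
      rw [add_assoc, hz, add_zero]
      exact hl.2
  · exact single_mem_okSet hl 1

lemma EhomAux_mem (m : ℕ) (j : ℕ) {x : List Bool →₀ ℤ}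
    (hx : x ∈ okSet (fun l => l.length = m ∧ (bval l : ZMod 3) ≠ 0)) :
    EhomAux j x ∈ okSet (fun l => l.length = m ∧ (bval l : ZMod 3) ≠ 0) := by
  induction j with
  | zero => exact hx
  | succ j ih =>
    show extendZ (basicExp j) (EhomAux j x) ∈ _
    exact extendZ_mem (fun l hl => basicExp_mem j m l hl) ih

/-! ### The reverse map -/

lemma Rhom_mem (k : ℕ) {x : List Bool →₀ ℤ}
    (hx : x ∈ okSet (fun l => l.length = 2 * k ∧ (bval l : ZMod 3) ≠ 0)) :
    Rhom x ∈ okSet (fun l => l.length = 2 * k ∧ (bval l : ZMod 3) ≠ 0) := by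
  refine extendZ_mem (fun l hl => ?_) hx
  obtain ⟨hlen, hres⟩ := hl
  refine single_mem_okSet ⟨by simp [hlen], ?_⟩ 1
  have hmn := bval_map_not l
  have hcast : (bval (l.map fun b => !b) : ZMod 3) + (bval l : ZMod 3) + 1
      = (2 : ZMod 3) ^ l.length := by exact_mod_cast congrArg (Nat.cast : ℕ → ZMod 3) hmn
  rw [hlen, two_pow_even] at hcast
  intro hc
  apply hres
  rw [hc] at hcast
  simpa using hcast

/-! ### The contraction map -/

lemma Kfun_def (l : List Bool) : Kfun l =
    match l, l.reverse with
    | a :: b :: _, c :: d :: _ =>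
      match contractFront a b, contractBack d c with
      | some x, some z => Finsupp.single (x :: (((l.drop 2).dropLast.dropLast) ++ [z])) 1
      | _, _ => 0
    | _, _ => 0 := rfl

lemma Kfun_eq (a b d c : Bool) (mid : List Bool) :
    Kfun (a :: b :: (mid ++ [d, c])) =
      match contractFront a b, contractBack d c with
      | some x, some z => Finsupp.single (x :: (mid ++ [z])) 1
      | _, _ => 0 := by
  have hrev : (a :: b :: (mid ++ [d, c])).reverse = c :: d :: (mid.reverse ++ [b, a]) := by simp
  have h1 : (mid ++ [d, c]).dropLast = mid ++ [d] := by
    rw [show mid ++ [d, c] = (mid ++ [d]) ++ [c] by simp, List.dropLast_concat]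
  have h2 : (mid ++ [d]).dropLast = mid := List.dropLast_concat ..
  have hdl : ((List.drop 2 (a :: b :: (mid ++ [d, c]))).dropLast.dropLast) = mid := by
    show (mid ++ [d, c]).dropLast.dropLast = mid
    rw [h1, h2]
  rw [Kfun_def, hrev, hdl]

lemma contract_res : ∀ (a b d c x z : Bool) (m : ZMod 3),
    contractFront a b = some x → contractBack d c = some z →
    (x.toNat : ZMod 3) + 2 * m + 2 * (z.toNat : ZMod 3)
      = -((a.toNat : ZMod 3) + 2 * (b.toNat : ZMod 3) + 4 * m
          + 4 * ((d.toNat : ZMod 3) + 2 * (c.toNat : ZMod 3))) := by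
  decide

lemma Kfun_mem (k : ℕ) (l : List Bool) (hlen : l.length = 2 * k + 4)
    (hr : (bval l : ZMod 3) ≠ 0) :
    Kfun l ∈ okSet (fun l' => l'.length = 2 * k + 2 ∧ (bval l' : ZMod 3) ≠ 0) := by
  obtain ⟨a, t₀, rfl⟩ : ∃ a t₀, l = a :: t₀ := by
    cases l with
    | nil => simp at hlen
    | cons a t => exact ⟨a, t, rfl⟩
  obtain ⟨b, t, rfl⟩ : ∃ b t, t₀ = b :: t := by
    cases t₀ with
    | nil => simp at hlen
    | cons b t => exact ⟨b, t, rfl⟩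
  have htlen : t.length = 2 * k + 2 := by simp at hlen; omega
  obtain ⟨c, d, s, hts⟩ : ∃ c d s, t.reverse = c :: d :: s := by
    rcases hh : t.reverse with _ | ⟨c, _ | ⟨d, s⟩⟩
    · have := congrArg List.length hh; simp [htlen] at this
    · have := congrArg List.length hh; simp [htlen] at this
    · exact ⟨_, _, _, rfl⟩
  have htt : t = s.reverse ++ [d, c] := by
    have h2 := congrArg List.reverse hts
    simpa using h2
  subst htt
  set mid := s.reverse with hmid
  have hml : mid.length = 2 * k := by
    simp [hmid] at htlen ⊢; omega
  rw [Kfun_eq]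
  cases hf : contractFront a b with
  | none =>
    cases hbk : contractBack d c <;> exact AddSubgroup.zero_mem _
  | some x =>
    cases hbk : contractBack d c with
    | none => exact AddSubgroup.zero_mem _
    | some z =>
      refine single_mem_okSet ⟨by simp [hml], ?_⟩ 1
      have e1 : bval (a :: b :: (mid ++ [d, c]))
          = a.toNat + 2 * b.toNat + 4 * bval mid
            + 2 ^ mid.length * (4 * (d.toNat + 2 * c.toNat)) := by
        simp [bval, bval_append]; ring
      have e2 : bval (x :: (mid ++ [z]))
          = x.toNat + 2 * bval mid + 2 ^ mid.length * (2 * z.toNat) := by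
        simp [bval, bval_append]; ring
      have hpow : ((2 : ZMod 3)) ^ mid.length = 1 := by rw [hml, two_pow_even]
      have c1 : (bval (a :: b :: (mid ++ [d, c])) : ZMod 3)
          = (a.toNat : ZMod 3) + 2 * (b.toNat : ZMod 3) + 4 * (bval mid : ZMod 3)
            + 4 * ((d.toNat : ZMod 3) + 2 * (c.toNat : ZMod 3)) := by
        rw [e1]; push_cast; rw [hpow]; ring
      have c2 : (bval (x :: (mid ++ [z])) : ZMod 3)
          = (x.toNat : ZMod 3) + 2 * (bval mid : ZMod 3) + 2 * (z.toNat : ZMod 3) := by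
        rw [e2]; push_cast; rw [hpow]; ring
      rw [c2, contract_res a b d c x z _ hf hbk, ← c1]
      exact neg_ne_zero.mpr hr

/-! ### Vanishing of `Chom` outside multiples of 3 -/

lemma Chom_vanish (n : ℕ) (hn : 1 ≤ n) :
    ∀ x ∈ okSet (fun l => l.length = 2 * n ∧ (bval l : ZMod 3) ≠ 0), Chom n x = 0 := by
  induction n, hn using Nat.le_induction with
  | base =>
    intro x hx
    show liftZ C1fun x = 0
    refine liftZ_eq_zero (fun l hl => ?_)
    obtain ⟨hlen, hres⟩ := hx l hl
    unfold C1fun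
    split_ifs with h
    · exfalso
      rcases h with rfl | rfl
      · exact hres (by decide)
      · exact hres (by decide)
    · rfl
  | succ n hn ih =>
    obtain ⟨m, rfl⟩ : ∃ m, n = m + 1 := ⟨n - 1, by omega⟩
    intro x hx
    show Chom (m + 2) x = 0
    rw [Chom]
    simp only [AddMonoidHom.comp_apply]
    have h1 : Khom x ∈ okSet (fun l => l.length = 2 * m + 2 ∧ (bval l : ZMod 3) ≠ 0) := by
      refine extendZ_mem (fun l hl => ?_) hx
      exact Kfun_mem m l (by omega) hl.2
    have h2 := EhomAux_mem (2 * m + 2) (2 * m + 1) h1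
    have h3 : EhomAux (2 * m + 1) (Khom x)
        ∈ okSet (fun l => l.length = 2 * (m + 1) ∧ (bval l : ZMod 3) ≠ 0) :=
      okSet_mono (fun l hl => ⟨by omega, hl.2⟩) h2
    exact ih _ (Rhom_mem (m + 1) h3)

/-! ### The main theorem -/

/-- The support of `C_n` has size at most `⌊2^{2n}/3⌋ + 1`. -/
theorem support_C_card_le (n : ℕ) (hn : 1 ≤ n) :
    Nat.card {ε : Fin (2 * n) → Bool // Cfun n ε ≠ 0} ≤ 2 ^ (2 * n) / 3 + 1 := by
  classical
  have key : ∀ ε : Fin (2 * n) → Bool, Cfun n ε ≠ 0 → (bval (List.ofFn ε) : ZMod 3) = 0 := by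
    intro ε h
    by_contra hres
    exact h (Chom_vanish n hn _ (single_mem_okSet ⟨by simp, hres⟩ 1))
  have h1 : Nat.card {ε : Fin (2 * n) → Bool // Cfun n ε ≠ 0}
      ≤ Nat.card {ε : Fin (2 * n) → Bool // (bval (List.ofFn ε) : ZMod 3) = 0} := by
    refine Nat.card_le_card_of_injective (fun e => ⟨e.1, key e.1 e.2⟩) ?_
    intro a b hab
    rw [Subtype.mk.injEq] at hab
    exact Subtype.ext hab
  refine h1.trans ?_
  have hdvd : ∀ ε : Fin (2 * n) → Bool, (bval (List.ofFn ε) : ZMod 3) = 0 →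
      3 ∣ bval (List.ofFn ε) := fun ε h => (ZMod.natCast_eq_zero_iff _ 3).mp h
  have hlt : ∀ ε : Fin (2 * n) → Bool, bval (List.ofFn ε) / 3 < 2 ^ (2 * n) / 3 + 1 := by
    intro ε
    have h := bval_lt (List.ofFn ε)
    rw [List.length_ofFn] at h
    have : bval (List.ofFn ε) / 3 ≤ 2 ^ (2 * n) / 3 := Nat.div_le_div_right (le_of_lt h)
    omega
  have h2 : Nat.card {ε : Fin (2 * n) → Bool // (bval (List.ofFn ε) : ZMod 3) = 0}
      ≤ Nat.card (Fin (2 ^ (2 * n) / 3 + 1)) := by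
    refine Nat.card_le_card_of_injective
      (fun e => (⟨bval (List.ofFn e.1) / 3, hlt e.1⟩ : Fin (2 ^ (2 * n) / 3 + 1))) ?_
    rintro ⟨ε, hε⟩ ⟨ε', hε'⟩ hab
    have hq := hdvd ε hε
    have hq' := hdvd ε' hε'
    obtain ⟨q, hqe⟩ := hq
    obtain ⟨q', hqe'⟩ := hq'
    have hv : bval (List.ofFn ε) / 3 = bval (List.ofFn ε') / 3 := by
      simpa using congrArg Fin.val hab
    have hbv : bval (List.ofFn ε) = bval (List.ofFn ε') := by omega
    have hlen : (List.ofFn ε).length = (List.ofFn ε').length := by simp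
    exact Subtype.ext (List.ofFn_injective (bval_inj hlen hbv))
  simpa using h2
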